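/- Suppose g ∈ G acts on the tangent space V neither as the identity nor as a quasi-reflection, and let r be the multiplicative order of α(g). If r ∈ {9, 16, 18}, then Σ(g|_V) ≥ 1 (for every squarefree D < 0). -/

import Mathlib

open Matrix Complex Polynomial

set_option synthInstance.maxHeartbeats 800000
set_option maxHeartbeats 1000000

/-- The unique `t ∈ [0,1)` with `z = exp(2πi·t)` when `z` is a root of unity;
for an eigenvalue `ζ^a` (`ζ = e^{2πi/m}`, `0 ≤ a < m`) this is `a/m`. -/
noncomputable def unitFrac (z : ℂ) : ℝ :=
  if 0 ≤ z.arg then z.arg / (2 * Real.pi) else z.arg / (2 * Real.pi) + 1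

/-- The Reid–Tai sum `Σ(f) = Σ_i a_i/m` of an endomorphism, where the sum runs
over the eigenvalues of `f` counted with multiplicity (the roots of the
characteristic polynomial). -/
noncomputable def reidTaiSum {V : Type} [AddCommGroup V] [Module ℂ V]
    [Module.Finite ℂ V] [Module.Free ℂ V] (f : Module.End ℂ V) : ℝ :=
  ((LinearMap.charpoly f).roots.map unitFrac).sum

/-- `f` is a quasi-reflection: exactly one of its eigenvalues
(counted with multiplicity) is different from `1`. -/
noncomputable def IsQuasiReflection {V : Type} [AddCommGroup V] [Module ℂ V]
    [Module.Finite ℂ V] [Module.Free ℂ V] (f : Module.End ℂ V) : Prop :=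
  Multiset.card ((LinearMap.charpoly f).roots.filter (fun z => z ≠ 1)) = 1

/-!
Write `α = e^{2πi j/r}` with `j` prime to `r`. Since `g` has entries in the quadratic field `K`,
every `K`-conjugate `α^k` of `α` is again an eigenvalue of `g`; the exponents `k` form a subgroup
`T ≤ (ℤ/r)ˣ` of index at most `[K : ℚ] ≤ 2`. For `k ∈ T`, `k ≠ 1`, an eigenvector of `g` for `α^k`
lies outside `W` and so gives an eigenvector of `g` on `V = Hom(W, ℂ^{n+1}/W)` with eigenvalue
`α^{k-1}`, which contributes `(j(k-1) mod r)/r` to the Reid–Tai sum. A subgroup of index at most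
two contains all squares, and for `r = 16`, having at least four elements, also a non-square `t`
together with `9t`; a finite check over `(ℤ/r)ˣ` shows that these contributions already add up to
at least `1`.
-/

open Real

theorem unitFrac_nonneg (z : ℂ) : 0 ≤ unitFrac z := by
  have hπ := pi_pos
  rw [unitFrac]
  split_ifs
  · positivity
  · have : -1 < z.arg / (2 * π) := by
      rw [lt_div_iff₀ (by positivity)]; linarith [neg_pi_lt_arg z]
    linarith

theorem unitFrac_exp_two_pi_mul_I {t : ℝ} (h0 : 0 ≤ t) (h1 : t < 1) :
    unitFrac (exp (2 * π * I * t)) = t := by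
  have hπ := pi_pos
  rw [show 2 * π * I * t = ((2 * π * t : ℝ) : ℂ) * I by push_cast; ring, unitFrac, arg_exp_mul_I]
  rcases le_or_gt t (1 / 2) with ht | ht
  · have : toIocMod two_pi_pos (-π) (2 * π * t) = 2 * π * t :=
      (toIocMod_eq_iff _).2 ⟨⟨by nlinarith, by nlinarith⟩, 0, by simp⟩
    rw [this, if_pos (by positivity)]
    field_simp
  · have : toIocMod two_pi_pos (-π) (2 * π * t) = 2 * π * t - 2 * π :=
      (toIocMod_eq_iff _).2 ⟨⟨by nlinarith, by nlinarith⟩, 1, by simp⟩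
    rw [this, if_neg (by nlinarith)]
    field_simp
    ring

theorem unitFrac_exp_two_pi_mul_I_int_div {r : ℕ} [NeZero r] (x : ℤ) :
    unitFrac (exp (2 * π * I * (x / r))) = ((x : ZMod r).val : ℝ) / r := by
  have hr : (0 : ℝ) < r := by exact_mod_cast Nat.pos_of_neZero r
  have hexp : exp (2 * π * I * (x / r)) = exp (2 * π * I * (((x : ZMod r).val : ℝ) / r : ℝ)) := by
    refine exp_eq_exp_iff_exists_int.2 ⟨x / r, ?_⟩
    have hval : (((x : ZMod r).val : ℝ) : ℂ) = x - r * (x / r : ℤ) := by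
      rw [← Int.cast_natCast (R := ℝ), ZMod.val_intCast, Int.emod_def]; push_cast; ring
    have hr' : (r : ℂ) ≠ 0 := by exact_mod_cast hr.ne'
    rw [Complex.ofReal_div, hval]
    push_cast
    field_simp
    ring
  rw [hexp]
  exact unitFrac_exp_two_pi_mul_I (by positivity)
    ((div_lt_one hr).2 (by exact_mod_cast ZMod.val_lt _))

theorem IsPrimitiveRoot.exists_unitFrac_zpow {α : ℂ} {r : ℕ} [NeZero r]
    (hα : IsPrimitiveRoot α r) :
    ∃ j : (ZMod r)ˣ, ∀ m : ℤ, unitFrac (α ^ m) = (((j : ZMod r) * m).val : ℝ) / r := by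
  obtain ⟨i, -, hi, rfl⟩ := (Complex.isPrimitiveRoot_iff α r (NeZero.ne r)).1 hα
  refine ⟨ZMod.unitOfCoprime i hi, fun m => ?_⟩
  rw [← exp_int_mul, ZMod.coe_unitOfCoprime,
    show (m : ℂ) * (2 * π * I * (i / r)) = 2 * π * I * (((i * m : ℤ) : ℂ) / r) by push_cast; ring,
    unitFrac_exp_two_pi_mul_I_int_div]
  push_cast
  rfl

theorem IsPrimitiveRoot.exists_unitFrac_inv_mul_pow {α : ℂ} {r : ℕ} [NeZero r]
    (hα : IsPrimitiveRoot α r) :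
    ∃ j : (ZMod r)ˣ, ∀ k : ZMod r,
      unitFrac (α⁻¹ * α ^ k.val) = (((j : ZMod r) * (k - 1)).val : ℝ) / r := by
  obtain ⟨j, hj⟩ := hα.exists_unitFrac_zpow
  refine ⟨j, fun k => ?_⟩
  rw [← zpow_natCast, ← _root_.zpow_neg_one, ← zpow_add₀ (hα.ne_zero (NeZero.ne r)), hj]
  push_cast [ZMod.natCast_val, ZMod.cast_id]
  ring_nf

theorem IsPrimitiveRoot.pow_val_injective {M : Type*} [CommMonoid M] {α : M} {r : ℕ} [NeZero r]
    (hα : IsPrimitiveRoot α r) : Function.Injective fun k : ZMod r => α ^ k.val :=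
  fun _ _ h => ZMod.val_injective r (hα.pow_inj (ZMod.val_lt _) (ZMod.val_lt _) h)

theorem sum_unitFrac_le_reidTaiSum {V : Type} {ι : Type*} [AddCommGroup V] [Module ℂ V]
    [Module.Finite ℂ V] [Module.Free ℂ V] (f : Module.End ℂ V) {s : Finset ι} {e : ι → ℂ}
    (he : Set.InjOn e s) (hs : ∀ i ∈ s, f.HasEigenvalue (e i)) :
    ∑ i ∈ s, unitFrac (e i) ≤ reidTaiSum f := by
  classical
  have hle : (s.image e).val ≤ f.charpoly.roots :=
    (Multiset.le_iff_subset (s.image e).nodup).2 fun z hz => by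
      obtain ⟨i, hi, rfl⟩ := Finset.mem_image.1 hz
      exact (mem_roots f.charpoly_monic.ne_zero).2
        ((f.hasEigenvalue_iff_isRoot_charpoly _).1 (hs i hi))
  obtain ⟨u, hu⟩ := Multiset.le_iff_exists_add.1 hle
  rw [← Finset.sum_image he, reidTaiSum, hu, Multiset.map_add, Multiset.sum_add,
    Finset.sum_eq_multiset_sum]
  exact le_add_of_nonneg_right <| Multiset.sum_nonneg fun x hx => by
    obtain ⟨z, -, rfl⟩ := Multiset.mem_map.1 hx
    exact unitFrac_nonneg z

theorem Matrix.hasEigenvalue_map_of_aeval_minpoly {F L n : Type*} [Field F] [Field L]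
    [Algebra F L] [Fintype n] [DecidableEq n] (M : Matrix n n F) {α β : L}
    (hα : Module.End.HasEigenvalue (M.map (algebraMap F L)).mulVecLin α)
    (hβ : aeval β (minpoly F α) = 0) :
    Module.End.HasEigenvalue (M.map (algebraMap F L)).mulVecLin β := by
  rw [Module.End.hasEigenvalue_iff_isRoot_charpoly, Matrix.charpoly_mulVecLin, charpoly_map,
    IsRoot, eval_map_algebraMap] at hα ⊢
  exact aeval_eq_zero_of_dvd_aeval_eq_zero (minpoly.dvd F α hα) hβ

theorem hasEigenvalue_inv_mul_of_tangent {k E : Type*} [Field k] [AddCommGroup E] [Module k E]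
    (g : E →ₗ[k] E) {ω v : E} {α β : k} (hω : ω ≠ 0) (hα : α ≠ 0) (hgω : g ω = α • ω)
    (hgW : ∀ x ∈ k ∙ ω, g x ∈ k ∙ ω)
    (ρ : Module.End k ((k ∙ ω) →ₗ[k] E ⧸ (k ∙ ω)))
    (hρ : ∀ (φ : (k ∙ ω) →ₗ[k] E ⧸ (k ∙ ω)) (x : k ∙ ω) (y : E),
      φ x = Submodule.Quotient.mk y → ρ φ ⟨g x, hgW x x.2⟩ = Submodule.Quotient.mk (g y))
    (hv : g v = β • v) (hv0 : v ≠ 0) (hβ : β ≠ α) :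
    ρ.HasEigenvalue (α⁻¹ * β) := by
  have hgW_smul : ∀ x ∈ k ∙ ω, g x = α • x := by
    intro x hx
    obtain ⟨c, rfl⟩ := Submodule.mem_span_singleton.1 hx
    rw [map_smul, hgω, smul_comm]
  have hvW : v ∉ k ∙ ω := fun h => hv0 <| by
    have : (β - α) • v = 0 := by rw [sub_smul, ← hv, hgW_smul v h, sub_self]
    exact (smul_eq_zero.1 this).resolve_left (sub_ne_zero.2 hβ)
  let coord : (k ∙ ω) ≃ₗ[k] k := (LinearEquiv.toSpanNonzeroSingleton k E ω hω).symm
  let φ : (k ∙ ω) →ₗ[k] E ⧸ (k ∙ ω) :=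
    (k ∙ ω).mkQ ∘ₗ LinearMap.toSpanSingleton k E v ∘ₗ coord.toLinearMap
  refine Module.End.hasEigenvalue_of_hasEigenvector (x := φ)
    ⟨Module.End.mem_eigenspace_iff.2 ?_, ?_⟩
  · ext x
    have hx : (⟨g (α⁻¹ • x : k ∙ ω), hgW _ (α⁻¹ • x).2⟩ : k ∙ ω) = x := by
      ext
      change g _ = _
      rw [hgW_smul _ (α⁻¹ • x).2, Submodule.coe_smul, smul_inv_smul₀ hα]
    have := hρ φ (α⁻¹ • x) (coord (α⁻¹ • x) • v) rfl
    rw [hx] at this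
    rw [this, map_smul, hv, smul_smul, LinearMap.smul_apply]
    simp [φ, smul_smul, mul_assoc, mul_comm β]
  · intro h0
    have : φ (coord.symm 1) = 0 := by rw [h0]; rfl
    exact hvW ((Submodule.Quotient.mk_eq_zero _).1 (by simpa [φ] using this))

theorem minpoly.aeval_pow_mul_eq_zero {F A : Type*} [Field F] [CommRing A] [Algebra F A]
    {α : A} {a b : ℕ} (ha : Polynomial.aeval (α ^ a) (minpoly F α) = 0)
    (hb : Polynomial.aeval (α ^ b) (minpoly F α) = 0) :
    Polynomial.aeval (α ^ (a * b)) (minpoly F α) = 0 := by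
  have hdvd : minpoly F α ∣ (minpoly F α).comp (X ^ b) :=
    minpoly.dvd F α (by simpa [aeval_comp] using hb)
  simpa [aeval_comp, pow_mul] using aeval_eq_zero_of_dvd_aeval_eq_zero hdvd ha

theorem minpoly.natDegree_le_finrank_mul {K L : Type*} [Field K] [Field L] [Algebra K L]
    (F : IntermediateField K L) [FiniteDimensional K F] {x : L} (hx : IsIntegral K x) :
    (minpoly K x).natDegree ≤ Module.finrank K F * (minpoly F x).natDegree := by
  have hxF : IsIntegral F x := hx.tower_top
  let E := IntermediateField.adjoin F {x}
  have : FiniteDimensional F E := IntermediateField.adjoin.finiteDimensional hxF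
  have : FiniteDimensional K E := FiniteDimensional.trans K F E
  have : IsScalarTower K E L := .of_algebraMap_eq fun _ => rfl
  let xE : E := ⟨x, IntermediateField.mem_adjoin_simple_self F x⟩
  calc (minpoly K x).natDegree = (minpoly K xE).natDegree := by
        rw [← minpoly.algebraMap_eq (algebraMap E L).injective xE]; rfl
    _ ≤ Module.finrank K E := minpoly.natDegree_le xE
    _ = Module.finrank K F * (minpoly F x).natDegree := by
        rw [← Module.finrank_mul_finrank K F E, IntermediateField.adjoin.finrank hxF]

theorem isIntegral_of_sq_eq_algebraMap {K L : Type*} [Field K] [Field L] [Algebra K L]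
    {δ : L} {c : K} (h : δ ^ 2 = algebraMap K L c) : IsIntegral K δ :=
  ⟨X ^ 2 - C c, monic_X_pow_sub_C c two_ne_zero, by simp [h]⟩

theorem IntermediateField.finrank_adjoin_le_two_of_sq_eq {K L : Type*} [Field K] [Field L]
    [Algebra K L] {δ : L} {c : K} (h : δ ^ 2 = algebraMap K L c) :
    Module.finrank K (adjoin K {δ}) ≤ 2 := by
  rw [adjoin.finrank (isIntegral_of_sq_eq_algebraMap h), ← natDegree_X_pow_sub_C (n := 2) (r := c)]
  exact natDegree_le_natDegree <|
    minpoly.degree_le_of_ne_zero K δ (X_pow_sub_C_ne_zero two_pos c) (by simp [h])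

theorem IsPrimitiveRoot.natDegree_minpoly_le_card {F : Type*} [Field F] [CharZero F]
    [Algebra F ℂ] {α : ℂ} {r : ℕ} [NeZero r] (hα : IsPrimitiveRoot α r) :
    (minpoly F α).natDegree ≤
      Nat.card {k : (ZMod r)ˣ // aeval (α ^ (k : ZMod r).val) (minpoly F α) = 0} := by
  classical
  have hint : IsIntegral F α := (hα.isIntegral (NeZero.pos r)).tower_top
  have hp0 : minpoly F α ≠ 0 := minpoly.ne_zero hint
  have hdvd : minpoly F α ∣ cyclotomic r F := minpoly.dvd F α <| by
    rw [aeval_def, ← eval_map, map_cyclotomic]; exact hα.isRoot_cyclotomic (NeZero.pos r)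
  rw [← Nat.card_eq_fintype_card.trans (card_rootSet_eq_natDegree (K := ℂ)
    (minpoly.irreducible hint).separable (IsAlgClosed.splits _))]
  refine Nat.card_le_card_of_surjective (fun k => ⟨_, mem_rootSet.2 ⟨hp0, k.2⟩⟩) ?_
  rintro ⟨β, hβ⟩
  have hβp : aeval β (minpoly F α) = 0 := (mem_rootSet.1 hβ).2
  have hβprim : IsPrimitiveRoot β r := by
    rw [← isRoot_cyclotomic_iff (R := ℂ), ← map_cyclotomic r (algebraMap F ℂ), IsRoot,
      eval_map_algebraMap]
    exact aeval_eq_zero_of_dvd_aeval_eq_zero hdvd hβp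
  obtain ⟨i, hi, rfl⟩ := hα.eq_pow_of_pow_eq_one hβprim.pow_eq_one
  have hcop : i.Coprime r := (hα.pow_iff_coprime (NeZero.pos r) i).1 hβprim
  have hval : ((ZMod.unitOfCoprime i hcop : ZMod r)).val = i := by
    rw [ZMod.coe_unitOfCoprime, ZMod.val_natCast, Nat.mod_eq_of_lt hi]
  refine ⟨⟨ZMod.unitOfCoprime i hcop, by rwa [hval]⟩, ?_⟩
  simp only [hval]

theorem IsPrimitiveRoot.exists_subgroup_index_le_finrank {F : IntermediateField ℚ ℂ}
    [FiniteDimensional ℚ F] {α : ℂ} {r : ℕ} [NeZero r] (hα : IsPrimitiveRoot α r) :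
    ∃ T : Subgroup (ZMod r)ˣ, T.index ≤ Module.finrank ℚ F ∧
      ∀ k ∈ T, aeval (α ^ (k : ZMod r).val) (minpoly F α) = 0 := by
  have hpow_mod : ∀ m, α ^ (m % r) = α ^ m := by
    intro m; rw [hα.eq_orderOf, pow_mod_orderOf]
  let M : Submonoid (ZMod r)ˣ :=
    { carrier := {k | aeval (α ^ (k : ZMod r).val) (minpoly F α) = 0}
      mul_mem' := fun {k l} hk hl => by
        simp only [Set.mem_ofPred_eq, Units.val_mul, ZMod.val_mul, hpow_mod] at hk hl ⊢
        exact minpoly.aeval_pow_mul_eq_zero hk hl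
      one_mem' := by
        simp only [Set.mem_ofPred_eq, Units.val_one, ZMod.val_one_eq_one_mod, hpow_mod, pow_one]
        exact minpoly.aeval F α }
  set T := Subgroup.closure (M : Set (ZMod r)ˣ)
  have hmem : ∀ k, k ∈ T ↔ k ∈ M := fun k => by
    rw [← Subgroup.mem_toSubmonoid, Subgroup.closure_toSubmonoid_of_finite, Submonoid.closure_eq]
  refine ⟨T, ?_, fun k hk => (hmem k).1 hk⟩
  have hint : IsIntegral ℚ α := (hα.isIntegral (NeZero.pos r)).tower_top
  have hcard : Nat.card T * T.index = r.totient := by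
    rw [Subgroup.card_mul_index, Nat.card_eq_fintype_card, ZMod.card_units_eq_totient]
  have hle : r.totient ≤ Module.finrank ℚ F * Nat.card T :=
    calc r.totient = (minpoly ℚ α).natDegree := by
          rw [← cyclotomic_eq_minpoly_rat hα (NeZero.pos r), natDegree_cyclotomic]
      _ ≤ Module.finrank ℚ F * (minpoly F α).natDegree := minpoly.natDegree_le_finrank_mul F hint
      _ ≤ Module.finrank ℚ F * Nat.card T := by
          rw [Nat.card_congr (Equiv.subtypeEquivRight hmem)]
          exact Nat.mul_le_mul_left _ hα.natDegree_minpoly_le_card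
  rw [← hcard, mul_comm (Module.finrank ℚ F)] at hle
  exact Nat.le_of_mul_le_mul_left hle Nat.card_pos

theorem Subgroup.sq_mem_of_index_le_two {G : Type*} [Group G] {H : Subgroup G} [H.FiniteIndex]
    (h : H.index ≤ 2) (a : G) : a ^ 2 ∈ H := by
  obtain h1 | h2 : H.index = 1 ∨ H.index = 2 := by have := FiniteIndex.index_ne_zero (H := H); omega
  · rw [index_eq_one.1 h1]; exact mem_top _
  · exact sq_mem_of_index_two h2 a

theorem ZMod.nine_le_sum_val_mul_sub_one : ∀ j t : (ZMod 9)ˣ,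
    9 ≤ ∑ k ∈ {k | (IsSquare k ∨ IsSquare (t⁻¹ * k)) ∧ k ≠ 1}, ((j : ZMod 9) * (k - 1)).val := by
  decide

theorem ZMod.sixteen_le_sum_val_mul_sub_one : ∀ j t : (ZMod 16)ˣ, ¬IsSquare t →
    16 ≤ ∑ k ∈ {k | (IsSquare k ∨ IsSquare (t⁻¹ * k)) ∧ k ≠ 1}, ((j : ZMod 16) * (k - 1)).val := by
  decide

theorem ZMod.eighteen_le_sum_val_mul_sub_one : ∀ j t : (ZMod 18)ˣ,
    18 ≤ ∑ k ∈ {k | (IsSquare k ∨ IsSquare (t⁻¹ * k)) ∧ k ≠ 1}, ((j : ZMod 18) * (k - 1)).val := by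
  decide

theorem ZMod.card_isSquare_units_sixteen : Nat.card {k : (ZMod 16)ˣ | IsSquare k} = 2 := by
  rw [Nat.card_eq_fintype_card]; decide

theorem le_sum_val_mul_sub_one {r : ℕ} [NeZero r] (hr : r = 9 ∨ r = 16 ∨ r = 18)
    {T : Subgroup (ZMod r)ˣ} [DecidablePred (· ∈ T)] (hT : T.index ≤ 2) (j : (ZMod r)ˣ) :
    r ≤ ∑ k ∈ {k | k ∈ T ∧ k ≠ 1}, ((j : ZMod r) * (k - 1)).val := by
  have hsub : ∀ t ∈ T, ∑ k ∈ {k | (IsSquare k ∨ IsSquare (t⁻¹ * k)) ∧ k ≠ 1},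
      ((j : ZMod r) * (k - 1)).val ≤ ∑ k ∈ {k | k ∈ T ∧ k ≠ 1}, ((j : ZMod r) * (k - 1)).val := by
    refine fun t ht => Finset.sum_le_sum_of_subset fun k => ?_
    simp only [Finset.mem_filter, Finset.mem_univ, true_and]
    rintro ⟨⟨a, hk⟩ | ⟨a, hk⟩, hk1⟩
    · exact ⟨by simpa [hk, sq] using Subgroup.sq_mem_of_index_le_two hT a, hk1⟩
    · refine ⟨?_, hk1⟩
      simpa [← hk, sq] using T.mul_mem ht (Subgroup.sq_mem_of_index_le_two hT a)
  rcases hr with rfl | rfl | rfl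
  · exact le_trans (ZMod.nine_le_sum_val_mul_sub_one j 1) (hsub 1 T.one_mem)
  · obtain ⟨t, ht, hts⟩ : ∃ t ∈ T, ¬IsSquare t := by
      by_contra! h
      have hcard : Nat.card T * T.index = 8 := by
        rw [Subgroup.card_mul_index, Nat.card_eq_fintype_card]; rfl
      have := Nat.card_mono (t := {k : (ZMod 16)ˣ | IsSquare k}) (Set.toFinite _) h
      rw [ZMod.card_isSquare_units_sixteen] at this
      nlinarith
    exact le_trans (ZMod.sixteen_le_sum_val_mul_sub_one j t hts) (hsub t ht)
  · exact le_trans (ZMod.eighteen_le_sum_val_mul_sub_one j 1) (hsub 1 T.one_mem)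

theorem IsPrimitiveRoot.one_le_sum_unitFrac_inv_mul_pow {α : ℂ} {r : ℕ} [NeZero r]
    (hα : IsPrimitiveRoot α r) (hr : r = 9 ∨ r = 16 ∨ r = 18) {T : Subgroup (ZMod r)ˣ}
    [DecidablePred (· ∈ T)] (hT : T.index ≤ 2) :
    1 ≤ ∑ k ∈ {k | k ∈ T ∧ k ≠ 1}, unitFrac (α⁻¹ * α ^ (k : ZMod r).val) := by
  obtain ⟨j, hj⟩ := hα.exists_unitFrac_inv_mul_pow
  simp only [hj, ← Finset.sum_div]
  rw [le_div_iff₀ (by simp [Nat.pos_of_neZero]), one_mul]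
  exact_mod_cast le_sum_val_mul_sub_one hr hT j

theorem stmt4
    (n : ℕ)
    (D : ℤ)
    (δ : ℂ) (hδ : δ ^ 2 = (D : ℂ))
    (K : IntermediateField ℚ ℂ) (hK : K = IntermediateField.adjoin ℚ {δ})
    (H : Matrix (Fin (n + 1)) (Fin (n + 1)) ℂ)
    (UΛ : Subgroup (GL (Fin (n + 1)) ℂ))
    (hUΛ : ∀ g : GL (Fin (n + 1)) ℂ, g ∈ UΛ ↔
      ((∀ i j, (g : Matrix (Fin (n + 1)) (Fin (n + 1)) ℂ) i j ∈ K ∧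
          IsIntegral ℤ ((g : Matrix (Fin (n + 1)) (Fin (n + 1)) ℂ) i j)) ∧
       (∀ i j, ((g⁻¹ : GL (Fin (n + 1)) ℂ) : Matrix (Fin (n + 1)) (Fin (n + 1)) ℂ) i j ∈ K ∧
          IsIntegral ℤ (((g⁻¹ : GL (Fin (n + 1)) ℂ) : Matrix (Fin (n + 1)) (Fin (n + 1)) ℂ) i j)) ∧
       (g : Matrix (Fin (n + 1)) (Fin (n + 1)) ℂ)ᴴ * H *
          (g : Matrix (Fin (n + 1)) (Fin (n + 1)) ℂ) = H))
    (Γ : Subgroup (GL (Fin (n + 1)) ℂ)) (hΓ : Γ ≤ UΛ)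
    (ω : Fin (n + 1) → ℂ) (hω : (star ω ⬝ᵥ H.mulVec ω).re < 0)
    (W : Submodule ℂ (Fin (n + 1) → ℂ)) (hW : W = Submodule.span ℂ {ω})
    (g : GL (Fin (n + 1)) ℂ) (hgΓ : g ∈ Γ)
    (α : ℂ) (hα : (g : Matrix (Fin (n + 1)) (Fin (n + 1)) ℂ).mulVec ω = α • ω)
    (hgW : ∀ x ∈ W, (g : Matrix (Fin (n + 1)) (Fin (n + 1)) ℂ).mulVec x ∈ W)
    (ρ : Module.End ℂ (W →ₗ[ℂ] ((Fin (n + 1) → ℂ) ⧸ W)))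
    (hρ : ∀ (φ : W →ₗ[ℂ] ((Fin (n + 1) → ℂ) ⧸ W)) (x : W) (yrep : Fin (n + 1) → ℂ),
      φ x = Submodule.Quotient.mk yrep →
      ρ φ ⟨(g : Matrix (Fin (n + 1)) (Fin (n + 1)) ℂ).mulVec x, hgW x x.2⟩ =
        Submodule.Quotient.mk ((g : Matrix (Fin (n + 1)) (Fin (n + 1)) ℂ).mulVec yrep))
    (r : ℕ) (hr : r = orderOf α)
    (hr916 : r = 9 ∨ r = 16 ∨ r = 18) :
    1 ≤ reidTaiSum ρ := by
  classical
  subst hW hK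
  have hω0 : ω ≠ 0 := by rintro rfl; simp at hω
  have : NeZero r := ⟨by omega⟩
  have hαr : IsPrimitiveRoot α r := hr ▸ IsPrimitiveRoot.orderOf α
  have hα0 : α ≠ 0 := hαr.ne_zero (NeZero.ne r)
  have hδ' : δ ^ 2 = algebraMap ℚ ℂ D := by simpa using hδ
  have := IntermediateField.adjoin.finiteDimensional (isIntegral_of_sq_eq_algebraMap hδ')
  obtain ⟨T, hTidx, hTconj⟩ :=
    hαr.exists_subgroup_index_le_finrank (F := IntermediateField.adjoin ℚ {δ})
  obtain ⟨gK, hgK⟩ : ∃ M : Matrix (Fin (n + 1)) (Fin (n + 1)) (IntermediateField.adjoin ℚ {δ}),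
      M.map (algebraMap _ ℂ) = g :=
    ⟨fun i j => ⟨_, ((hUΛ g).1 (hΓ hgΓ)).1 i j |>.1⟩, rfl⟩
  have hgα : Module.End.HasEigenvalue (gK.map (algebraMap _ ℂ)).mulVecLin α := by
    rw [hgK]
    exact Module.End.hasEigenvalue_of_hasEigenvector ⟨Module.End.mem_eigenspace_iff.2 hα, hω0⟩
  have heig : ∀ k ∈ T, k ≠ 1 → ρ.HasEigenvalue (α⁻¹ * α ^ (k : ZMod r).val) := by
    intro k hkT hk1
    obtain ⟨v, hv, hv0⟩ :=
      (gK.hasEigenvalue_map_of_aeval_minpoly hgα (hTconj k hkT)).exists_hasEigenvector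
    rw [hgK, Module.End.mem_eigenspace_iff] at hv
    refine hasEigenvalue_inv_mul_of_tangent _ hω0 hα0 hα hgW ρ hρ hv hv0 fun h => hk1 ?_
    exact Units.ext <| (ZMod.val_eq_one (by omega) _).1 <|
      hαr.pow_inj (ZMod.val_lt _) (by omega) (by rw [h, pow_one])
  calc 1 ≤ ∑ k ∈ {k | k ∈ T ∧ k ≠ 1}, unitFrac (α⁻¹ * α ^ (k : ZMod r).val) :=
        hαr.one_le_sum_unitFrac_inv_mul_pow hr916
          (hTidx.trans (IntermediateField.finrank_adjoin_le_two_of_sq_eq hδ'))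
    _ ≤ reidTaiSum ρ :=
        sum_unitFrac_le_reidTaiSum ρ
          (fun k _ l _ h =>
            Units.ext (hαr.pow_val_injective (mul_left_cancel₀ (inv_ne_zero hα0) h)))
          fun k hk => heig k (Finset.mem_filter.1 hk).2.1 (Finset.mem_filter.1 hk).2.2
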